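/- arXiv:2402.13857 — 2 statements merged into one kernel-verified Lean document; each statement's English description precedes it below -/
import Mathlib

section
/- Let z, z' ∈ ℝ^k. Consider the randomized rounding scheme with grid side length β > 0: draw independent uniform offsets o_1,...,o_k ∈ [0,β] and thresholds u_1,...,u_k ∈ [0,1]; round each coordinate z[i] down to the grid point below it with probability p(z)[i] (chosen so the expectation equals z[i]) and up otherwise, using the threshold u_i. Then the probability (over the shared offsets and thresholds) that the rounded vectors of z and z' differ is at most 2β^{-1}·‖z − z'‖₁. -/
open MeasureTheory Set

/-- The uniform probability measure on the interval `[a, b]`. -/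
noncomputable def unifMeas (a b : ℝ) : Measure ℝ :=
  (ENNReal.ofReal (b - a))⁻¹ • volume.restrict (Icc a b)

/-- The largest grid point `o + jβ` (for `j : ℤ`) that is `≤ x`. -/
noncomputable def gridFloor (β o x : ℝ) : ℝ := o + β * ⌊(x - o) / β⌋

/-- The probability `p` of rounding `x` down, chosen so
`p * gridFloor + (1 - p) * (gridFloor + β) = x`. -/
noncomputable def roundProb (β o x : ℝ) : ℝ := (gridFloor β o x + β - x) / β

/-- The Alon–Klartag randomized rounding of `z` with offsets `o` and thresholds `u`:
coordinate `i` rounds down to `gridFloor β (o i) (z i)` if `u i ≤ roundProb β (o i) (z i)`,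
and up to `gridFloor β (o i) (z i) + β` otherwise. -/
noncomputable def akRound (k : ℕ) (β : ℝ) (o u : Fin k → ℝ) (z : Fin k → ℝ) :
    Fin k → ℝ := fun i =>
  if u i ≤ roundProb β (o i) (z i) then gridFloor β (o i) (z i)
  else gridFloor β (o i) (z i) + β

/-! Union bound over the coordinates. In a single coordinate the two roundings can differ only if
a grid point separates `x` and `y`, which for a uniform offset has probability at most `|x - y| / β`
(the translates of `Ioc x y` by `βℤ` meet a period in total length `|x - y|`), or if the grid
floors agree and the threshold falls between the two rounding probabilities, which then differ by
exactly `|x - y| / β`. -/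

open scoped Pointwise

lemma unifMeas_apply (a b : ℝ) (s : Set ℝ) :
    unifMeas a b s = (ENNReal.ofReal (b - a))⁻¹ * volume (s ∩ Icc a b) := by
  rw [unifMeas, Measure.smul_apply, Measure.restrict_apply' measurableSet_Icc, smul_eq_mul]

lemma isProbabilityMeasure_unifMeas {a b : ℝ} (h : a < b) :
    IsProbabilityMeasure (unifMeas a b) := by
  constructor
  rw [unifMeas_apply, univ_inter, Real.volume_Icc]
  exact ENNReal.inv_mul_cancel (by simpa using h) ENNReal.ofReal_ne_top

lemma unifMeas_zero_one_le (s : Set ℝ) : unifMeas 0 1 s ≤ volume s := by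
  rw [unifMeas_apply, sub_zero, ENNReal.ofReal_one, inv_one, one_mul]
  exact measure_mono inter_subset_left

@[fun_prop]
lemma measurable_gridFloor (β x : ℝ) : Measurable fun o => gridFloor β o x := by
  unfold gridFloor
  fun_prop

@[fun_prop]
lemma measurable_roundProb (β x : ℝ) : Measurable fun o => roundProb β o x := by
  unfold roundProb
  fun_prop

lemma exists_grid_mem_Ioc_of_gridFloor_ne {β o x y : ℝ} (hβ : 0 < β) (hxy : x ≤ y)
    (h : gridFloor β o x ≠ gridFloor β o y) :
    ∃ j : ℤ, o + β * j ∈ Ioc x y := by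
  have hlt : ⌊(x - o) / β⌋ < ⌊(y - o) / β⌋ :=
    (Int.floor_mono (by gcongr)).lt_of_ne fun heq => h (by simp only [gridFloor, heq])
  have hx := (div_lt_iff₀ hβ).1 (Int.floor_lt.1 hlt)
  have hy := (le_div_iff₀ hβ).1 (Int.floor_le ((y - o) / β))
  exact ⟨⌊(y - o) / β⌋, by constructor <;> linarith⟩

lemma volume_gridFloor_ne_inter_Ioc_le {β x y : ℝ} (hβ : 0 < β) (hxy : x ≤ y) :
    volume ({o | gridFloor β o x ≠ gridFloor β o y} ∩ Ioc 0 β) ≤ ENNReal.ofReal (y - x) := by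
  have hcover : {o | gridFloor β o x ≠ gridFloor β o y} ⊆
      ⋃ g : AddSubgroup.zmultiples β, g +ᵥ Ioc x y := by
    intro o ho
    obtain ⟨j, hj⟩ := exists_grid_mem_Ioc_of_gridFloor_ne hβ hxy ho
    refine mem_iUnion.2 ⟨⟨(-j) • β, AddSubgroup.zsmul_mem_zmultiples β (-j)⟩, ?_⟩
    refine ⟨o + β * j, hj, ?_⟩
    change (-j) • β + (o + β * j) = o
    rw [zsmul_eq_mul]
    push_cast
    ring
  calc volume ({o | gridFloor β o x ≠ gridFloor β o y} ∩ Ioc 0 β)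
      ≤ volume (⋃ g : AddSubgroup.zmultiples β, (g +ᵥ Ioc x y) ∩ Ioc 0 β) := by
        rw [← iUnion_inter]; exact measure_mono (inter_subset_inter_left _ hcover)
    _ ≤ ∑' g : AddSubgroup.zmultiples β, volume ((g +ᵥ Ioc x y) ∩ Ioc 0 β) := measure_iUnion_le _
    _ = volume (Ioc x y) := by
        simpa only [zero_add] using
          ((isAddFundamentalDomain_Ioc hβ 0).measure_eq_tsum (Ioc x y)).symm
    _ = ENNReal.ofReal (y - x) := Real.volume_Ioc

lemma unifMeas_gridFloor_ne_le {β : ℝ} (hβ : 0 < β) (x y : ℝ) :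
    unifMeas 0 β {o | gridFloor β o x ≠ gridFloor β o y} ≤ ENNReal.ofReal (|x - y| / β) := by
  wlog hxy : x ≤ y generalizing x y
  · simpa only [ne_comm, abs_sub_comm] using this y x (le_of_not_ge hxy)
  rw [unifMeas_apply, sub_zero, abs_sub_comm, abs_of_nonneg (sub_nonneg.2 hxy),
    ENNReal.ofReal_div_of_pos hβ, ENNReal.div_eq_inv_mul,
    ← measure_congr ((ae_eq_refl _).inter Ioc_ae_eq_Icc)]
  gcongr
  exact volume_gridFloor_ne_inter_Ioc_le hβ hxy

/-- The `i`-th coordinate of `akRound` is `roundCoord` applied to the `i`-th entries. -/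
noncomputable def roundCoord (β o u x : ℝ) : ℝ :=
  if u ≤ roundProb β o x then gridFloor β o x else gridFloor β o x + β

lemma measurable_roundCoord (β x : ℝ) : Measurable fun q : ℝ × ℝ => roundCoord β q.1 q.2 x := by
  unfold roundCoord
  exact Measurable.ite (measurableSet_le measurable_snd (by fun_prop)) (by fun_prop) (by fun_prop)

lemma roundProb_sub_roundProb {β o x y : ℝ} (h : gridFloor β o x = gridFloor β o y) :
    roundProb β o y - roundProb β o x = (x - y) / β := by
  simp only [roundProb, h]
  ring

lemma roundCoord_ne_subset_uIoc {β o x y : ℝ} (h : gridFloor β o x = gridFloor β o y) :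
    {u | roundCoord β o u x ≠ roundCoord β o u y} ⊆ uIoc (roundProb β o x) (roundProb β o y) := by
  intro u (hu : roundCoord β o u x ≠ roundCoord β o u y)
  simp only [roundCoord, h] at hu
  rw [mem_uIoc]
  split_ifs at hu with hx hy hy
  · exact absurd rfl hu
  · exact Or.inr ⟨not_le.1 hy, hx⟩
  · exact Or.inl ⟨not_le.1 hx, hy⟩
  · exact absurd rfl hu

lemma unifMeas_roundCoord_ne_le {β : ℝ} (hβ : 0 < β) (o x y : ℝ) :
    unifMeas 0 1 {u | roundCoord β o u x ≠ roundCoord β o u y} ≤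
      {o | gridFloor β o x ≠ gridFloor β o y}.indicator 1 o + ENNReal.ofReal (|x - y| / β) := by
  have := isProbabilityMeasure_unifMeas zero_lt_one
  by_cases h : gridFloor β o x = gridFloor β o y
  · calc _ ≤ volume (uIoc (roundProb β o x) (roundProb β o y)) :=
          (measure_mono (roundCoord_ne_subset_uIoc h)).trans (unifMeas_zero_one_le _)
      _ = ENNReal.ofReal (|x - y| / β) := by
          rw [Real.volume_uIoc, roundProb_sub_roundProb h, abs_div, abs_of_pos hβ]
      _ ≤ _ := le_add_self
  · rw [indicator_of_mem h]
    exact prob_le_one.trans le_self_add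

lemma prod_unifMeas_roundCoord_ne_le {β : ℝ} (hβ : 0 < β) (x y : ℝ) :
    ((unifMeas 0 β).prod (unifMeas 0 1))
        {q : ℝ × ℝ | roundCoord β q.1 q.2 x ≠ roundCoord β q.1 q.2 y} ≤
      ENNReal.ofReal (2 * |x - y| / β) := by
  have := isProbabilityMeasure_unifMeas hβ
  have := isProbabilityMeasure_unifMeas zero_lt_one
  have hE : MeasurableSet {q : ℝ × ℝ | roundCoord β q.1 q.2 x ≠ roundCoord β q.1 q.2 y} :=
    (measurableSet_eq_fun (measurable_roundCoord β x) (measurable_roundCoord β y)).compl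
  have hA : MeasurableSet {o | gridFloor β o x ≠ gridFloor β o y} :=
    (measurableSet_eq_fun (measurable_gridFloor β x) (measurable_gridFloor β y)).compl
  rw [Measure.prod_apply hE]
  calc _ ≤ ∫⁻ o, {o | gridFloor β o x ≠ gridFloor β o y}.indicator 1 o +
          ENNReal.ofReal (|x - y| / β) ∂unifMeas 0 β :=
        lintegral_mono fun o => unifMeas_roundCoord_ne_le hβ o x y
    _ = unifMeas 0 β {o | gridFloor β o x ≠ gridFloor β o y} + ENNReal.ofReal (|x - y| / β) := by
        rw [lintegral_add_right _ measurable_const, lintegral_indicator_one hA, lintegral_const,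
          measure_univ, mul_one]
    _ ≤ ENNReal.ofReal (|x - y| / β) + ENNReal.ofReal (|x - y| / β) := by
        gcongr
        exact unifMeas_gridFloor_ne_le hβ x y
    _ = ENNReal.ofReal (2 * |x - y| / β) := by
        rw [← ENNReal.ofReal_add (by positivity) (by positivity)]
        ring_nf

theorem stmt0 (k : ℕ) (β : ℝ) (hβ : 0 < β) (z z' : Fin k → ℝ) :
    ((Measure.pi (fun _ : Fin k => unifMeas 0 β)).prod
        (Measure.pi (fun _ : Fin k => unifMeas 0 1)))
        {p : (Fin k → ℝ) × (Fin k → ℝ) |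
          akRound k β p.1 p.2 z ≠ akRound k β p.1 p.2 z'}
      ≤ ENNReal.ofReal (2 / β * ∑ i, |z i - z' i|) := by
  have := isProbabilityMeasure_unifMeas hβ
  have := isProbabilityMeasure_unifMeas zero_lt_one
  have hcover :
      {p : (Fin k → ℝ) × (Fin k → ℝ) | akRound k β p.1 p.2 z ≠ akRound k β p.1 p.2 z'} ⊆
      ⋃ i, Prod.map (Function.eval i) (Function.eval i) ⁻¹'
        {q : ℝ × ℝ | roundCoord β q.1 q.2 (z i) ≠ roundCoord β q.1 q.2 (z' i)} := by
    intro p hp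
    obtain ⟨i, hi⟩ := Function.ne_iff.1 hp
    exact mem_iUnion.2 ⟨i, hi⟩
  calc _ ≤ ∑ i, _ := (measure_mono hcover).trans (measure_iUnion_fintype_le _ _)
    _ ≤ ∑ i, ENNReal.ofReal (2 * |z i - z' i| / β) := Finset.sum_le_sum fun i _ =>
        (((measurePreserving_eval _ i).prod (measurePreserving_eval _ i)).measure_preimage_le
          _).trans (prod_unifMeas_roundCoord_ne_le hβ _ _)
    _ = ENNReal.ofReal (2 / β * ∑ i, |z i - z' i|) := by
        rw [← ENNReal.ofReal_sum_of_nonneg fun i _ => by positivity, Finset.mul_sum]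
        congr 1
        exact Finset.sum_congr rfl fun i _ => by ring
end

section
/- Let D be a probability distribution over pairs (x,y), and let w_1,...,w_B be unit vectors such that for each i, Pr_{(x,y)∼D}[y·(w_iᵀx)/‖x‖ < τ/4] ≤ p. Let z = (1/B)Σ w_i. Then Pr_{(x,y)∼D}[y·(zᵀx)/‖x‖ < τ/8] ≤ 16p/τ. -/
open MeasureTheory
open scoped RealInnerProductSpace ENNReal

theorem stmt5 (d B : ℕ) (hB : 0 < B) (τ p : ℝ) (hτ : τ ∈ Set.Ioo (0 : ℝ) 1)
    (hp : p ∈ Set.Icc (0 : ℝ) 1)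
    (D : Measure (EuclideanSpace ℝ (Fin d) × ℝ)) [IsProbabilityMeasure D]
    (hsupp : ∀ᵐ q ∂D, q.1 ≠ 0 ∧ (q.2 = 1 ∨ q.2 = -1))
    (w : Fin B → EuclideanSpace ℝ (Fin d)) (hw : ∀ i, ‖w i‖ = 1)
    (herr : ∀ i, D {q | q.2 * ⟪w i, q.1⟫ / ‖q.1‖ < τ / 4} ≤ ENNReal.ofReal p)
    (z : EuclideanSpace ℝ (Fin d)) (hz : z = (B : ℝ)⁻¹ • ∑ i, w i) :
    D {q | q.2 * ⟪z, q.1⟫ / ‖q.1‖ < τ / 8} ≤ ENNReal.ofReal (16 * p / τ) := by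
  obtain ⟨hτ0, hτ1⟩ := hτ
  obtain ⟨hp0, hp1⟩ := hp
  have hBR : (0:ℝ) < B := by exact_mod_cast hB
  set S : Fin B → Set (EuclideanSpace ℝ (Fin d) × ℝ) :=
    fun i => {q | q.2 * ⟪w i, q.1⟫ / ‖q.1‖ < τ / 4} with hS
  have hSmeas : ∀ i, MeasurableSet (S i) := by
    intro i
    have h1 : Measurable fun q : EuclideanSpace ℝ (Fin d) × ℝ =>
        q.2 * ⟪w i, q.1⟫ / ‖q.1‖ := by
      apply Measurable.div
      · exact measurable_snd.mul
          (((continuous_const.inner continuous_id).comp continuous_fst).measurable)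
      · exact continuous_fst.norm.measurable
    exact measurableSet_lt h1 measurable_const
  set Z : EuclideanSpace ℝ (Fin d) × ℝ → ℝ≥0∞ :=
    fun q => ∑ i, (S i).indicator (fun _ => 1) q with hZdef
  have hZmeas : Measurable Z := by
    apply Finset.measurable_sum
    intro i _
    exact measurable_const.indicator (hSmeas i)
  have hint : ∫⁻ q, Z q ∂D ≤ (B : ℝ≥0∞) * ENNReal.ofReal p := by
    rw [hZdef]
    rw [lintegral_finset_sum _ (fun i _ => measurable_const.indicator (hSmeas i))]
    have hb : ∀ i ∈ Finset.univ, ∫⁻ q, (S i).indicator (fun _ => (1:ℝ≥0∞)) q ∂D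
        ≤ ENNReal.ofReal p := by
      intro i _
      rw [lintegral_indicator (hSmeas i)]
      simpa using herr i
    calc ∑ i, ∫⁻ q, (S i).indicator (fun _ => (1:ℝ≥0∞)) q ∂D
        ≤ ∑ _i : Fin B, ENNReal.ofReal p := Finset.sum_le_sum hb
      _ = (B : ℝ≥0∞) * ENNReal.ofReal p := by
          simp [Finset.sum_const, nsmul_eq_mul]
  set ε : ℝ≥0∞ := ENNReal.ofReal (τ * B / 16) with hε
  have key : {q : EuclideanSpace ℝ (Fin d) × ℝ | q.2 * ⟪z, q.1⟫ / ‖q.1‖ < τ / 8}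
      ≤ᵐ[D] {q | ε ≤ Z q} := by
    filter_upwards [hsupp] with q hq hmem
    obtain ⟨hx, hy⟩ := hq
    have hxnorm : 0 < ‖q.1‖ := norm_pos_iff.mpr hx
    have hy1 : |q.2| = 1 := by rcases hy with h | h <;> simp [h]
    set a : Fin B → ℝ := fun i => q.2 * ⟪w i, q.1⟫ / ‖q.1‖ with ha
    set s := Finset.univ.filter (fun i => q ∈ S i) with hs
    set t := Finset.univ.filter (fun i => ¬ q ∈ S i) with ht
    have hcardsum : s.card + t.card = B := by
      simpa using Finset.card_filter_add_card_filter_not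
        (s := (Finset.univ : Finset (Fin B))) (p := fun i => q ∈ S i)
    -- bound each a i
    have habd : ∀ i, -1 ≤ a i := by
      intro i
      have hcs : |⟪w i, q.1⟫| ≤ ‖q.1‖ := by
        have := abs_real_inner_le_norm (w i) q.1
        simpa [hw i] using this
      have : |a i| ≤ 1 := by
        rw [ha]
        simp only [abs_div, abs_mul, hy1, one_mul, abs_norm]
        exact div_le_one_of_le₀ hcs (le_of_lt hxnorm)
      linarith [abs_le.mp this |>.1]
    have hsum : ∑ i, a i = (B : ℝ) * (q.2 * ⟪z, q.1⟫ / ‖q.1‖) := by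
      have hinner : ⟪z, q.1⟫ = (B : ℝ)⁻¹ * ∑ i, ⟪w i, q.1⟫ := by
        rw [hz, real_inner_smul_left, sum_inner]
      rw [hinner, ha]
      rw [← Finset.sum_div, ← Finset.mul_sum]
      field_simp
    have hsumlt : ∑ i, a i < (B : ℝ) * (τ / 8) := by
      rw [hsum]
      have : q.2 * ⟪z, q.1⟫ / ‖q.1‖ < τ / 8 := hmem
      exact mul_lt_mul_of_pos_left this hBR
    have hsplit : ∑ i ∈ s, a i + ∑ i ∈ t, a i = ∑ i, a i := by
      rw [hs, ht]
      exact Finset.sum_filter_add_sum_filter_not _ _ _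
    have hlow1 : (-(s.card : ℝ)) ≤ ∑ i ∈ s, a i := by
      calc (-(s.card : ℝ)) = ∑ _i ∈ s, (-1 : ℝ) := by
            simp [Finset.sum_const]
        _ ≤ ∑ i ∈ s, a i := Finset.sum_le_sum (fun i _ => habd i)
    have hlow2 : (t.card : ℝ) * (τ / 4) ≤ ∑ i ∈ t, a i := by
      calc (t.card : ℝ) * (τ / 4) = ∑ _i ∈ t, (τ / 4) := by
            simp [Finset.sum_const, mul_comm]
        _ ≤ ∑ i ∈ t, a i := by
            apply Finset.sum_le_sum
            intro i hi
            rw [ht] at hi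
            have : ¬ q ∈ S i := (Finset.mem_filter.mp hi).2
            have : ¬ (a i < τ / 4) := this
            linarith [not_lt.mp this]
    have hk : (τ * B / 16 : ℝ) ≤ s.card := by
      have hkB : (s.card : ℝ) + t.card = B := by exact_mod_cast hcardsum
      have hk0 : (0:ℝ) ≤ s.card := Nat.cast_nonneg _
      nlinarith [hsumlt, hsplit, hlow1, hlow2]
    have hZq : Z q = (s.card : ℝ≥0∞) := by
      rw [hZdef]
      simp only [Set.indicator_apply]
      rw [Finset.sum_boole]
    show ε ≤ Z q
    rw [hZq, hε]
    calc ENNReal.ofReal (τ * B / 16) ≤ ENNReal.ofReal (s.card : ℝ) :=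
          ENNReal.ofReal_le_ofReal hk
      _ = (s.card : ℝ≥0∞) := by simp
  have hmarkov : ε * D {q | q.2 * ⟪z, q.1⟫ / ‖q.1‖ < τ / 8}
      ≤ (B : ℝ≥0∞) * ENNReal.ofReal p := by
    calc ε * D {q | q.2 * ⟪z, q.1⟫ / ‖q.1‖ < τ / 8}
        ≤ ε * D {q | ε ≤ Z q} := mul_le_mul_right (measure_mono_ae key) ε
      _ ≤ ∫⁻ q, Z q ∂D := mul_meas_ge_le_lintegral₀ hZmeas.aemeasurable ε
      _ ≤ _ := hint
  have hε0 : ε ≠ 0 := by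
    rw [hε]
    simp only [ne_eq, ENNReal.ofReal_eq_zero, not_le]
    positivity
  have hεtop : ε ≠ ⊤ := ENNReal.ofReal_ne_top
  have hfin : D {q | q.2 * ⟪z, q.1⟫ / ‖q.1‖ < τ / 8}
      ≤ ((B : ℝ≥0∞) * ENNReal.ofReal p) / ε := by
    rw [ENNReal.le_div_iff_mul_le (Or.inl hε0) (Or.inl hεtop)]
    rwa [mul_comm] at hmarkov
  refine hfin.trans ?_
  have hBp : (B : ℝ≥0∞) * ENNReal.ofReal p = ENNReal.ofReal ((B:ℝ) * p) := by
    rw [ENNReal.ofReal_mul (le_of_lt hBR)]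
    simp
  rw [hBp, hε, ← ENNReal.ofReal_div_of_pos (by positivity)]
  apply ENNReal.ofReal_le_ofReal
  rw [div_le_div_iff₀ (by positivity) (by positivity)]
  ring_nf
  nlinarith [hp0, hτ0, hBR]
end
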